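/- arXiv:1903.05883 — 4 statements merged into one kernel-verified Lean document; each statement's English description precedes it below -/
import Mathlib

section
/- Let M be a compact metric space, φ a continuous flow on M, and f : M → M a homeomorphism commuting with φ. Assume there exists T > 0 such that for every p ∈ M there is t ∈ [-T, T] with f(p) = φ_t(p). Then there is a unique function τ₁ : M ∖ Crit(φ) → ℝ such that f(x) = φ_{τ₁(x)}(x) for every x ∈ M ∖ Crit(φ); moreover τ₁ takes values in [-T, T], is continuous on M ∖ Crit(φ) (with the subspace topology), and is φ-invariant, i.e. τ₁(φ_s(x)) = τ₁(x) for all s ∈ ℝ and x ∈ M ∖ Crit(φ). -/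
/-!
Away from fixed and periodic points the orbit map `t ↦ φ t x` is injective, so the time `τ₁ x`
with `f x = φ (τ₁ x) x` is unique; uniqueness gives invariance, since `f (φ s x) = φ s (f x)`
is reached from `φ s x` in the same time. For continuity, the graph of `τ₁`, viewed as a map into
the compact interval `[-T, T]`, is the closed set `{(x, t) | f x = φ t x}`, and a map into a
compact space with closed graph is continuous.
-/

open Set

theorem continuous_of_isClosed_graph {X Y : Type*} [TopologicalSpace X] [TopologicalSpace Y]
    [CompactSpace Y] {g : X → Y} (hg : IsClosed {p : X × Y | p.2 = g p.1}) : Continuous g := by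
  refine continuous_iff_isClosed.2 fun C hC => ?_
  have hpre : g ⁻¹' C = Prod.fst '' ({p : X × Y | p.2 = g p.1} ∩ Prod.snd ⁻¹' C) := by
    ext x
    constructor
    · intro hx
      exact ⟨(x, g x), ⟨rfl, hx⟩, rfl⟩
    · rintro ⟨p, ⟨hp, hpC⟩, rfl⟩
      rwa [mem_preimage, ← show p.2 = g p.1 from hp]
  rw [hpre]
  exact isClosedMap_fst_of_compactSpace _ (hg.inter (hC.preimage continuous_snd))

section Flow

variable {M : Type*} {φ : ℝ → M → M}

theorem flow_sub_eq_self_of_flow_eq (hφ0 : ∀ x, φ 0 x = x)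
    (hφadd : ∀ s t x, φ (s + t) x = φ s (φ t x)) {p : M} {t t' : ℝ} (h : φ t p = φ t' p) :
    φ (t - t') p = p := by
  rw [sub_eq_neg_add, hφadd, h, ← hφadd, neg_add_cancel, hφ0]

theorem injective_flow_of_forall_ne (hφ0 : ∀ x, φ 0 x = x)
    (hφadd : ∀ s t x, φ (s + t) x = φ s (φ t x)) {p : M} (hp : ∀ s ≠ 0, φ s p ≠ p) :
    Function.Injective (φ · p) := fun t t' h => by
  by_contra hne
  exact hp (t - t') (sub_ne_zero.2 hne) (flow_sub_eq_self_of_flow_eq hφ0 hφadd h)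

theorem flow_ne_of_not_mem_crit {Crit : Set M}
    (hCrit : Crit = {p | (∀ t, φ t p = p) ∨ ((¬ ∀ t, φ t p = p) ∧ ∃ s, s ≠ 0 ∧ φ s p = p)})
    {p : M} (hp : p ∉ Crit) : ∀ s ≠ 0, φ s p ≠ p := by
  subst hCrit
  intro s hs hsp
  by_cases hfix : ∀ t, φ t p = p
  · exact hp (Or.inl hfix)
  · exact hp (Or.inr ⟨hfix, s, hs, hsp⟩)

theorem apply_flow_eq_flow_of_apply_eq (hφadd : ∀ s t x, φ (s + t) x = φ s (φ t x))
    {f : M → M} (hcomm : ∀ t x, f (φ t x) = φ t (f x)) {x : M} {t : ℝ} (hx : f x = φ t x)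
    (s : ℝ) : f (φ s x) = φ t (φ s x) := by
  rw [hcomm, hx, ← hφadd, ← hφadd, add_comm]

end Flow

theorem stmt_0_general
    {M : Type*} [MetricSpace M]
    (φ : ℝ → M → M)
    (hφcont : Continuous fun q : ℝ × M => φ q.1 q.2)
    (hφ0 : ∀ x, φ 0 x = x)
    (hφadd : ∀ s t x, φ (s + t) x = φ s (φ t x))
    (f : M ≃ₜ M)
    (hcomm : ∀ t x, f (φ t x) = φ t (f x))
    (T : ℝ)
    (hbound : ∀ p : M, ∃ t ∈ Set.Icc (-T) T, f p = φ t p)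
    (Crit : Set M)
    (hCrit : Crit = {p | (∀ t, φ t p = p) ∨
      ((¬ ∀ t, φ t p = p) ∧ ∃ s, s ≠ 0 ∧ φ s p = p)}) :
    ∃ τ₁ : {x : M // x ∉ Crit} → ℝ,
      (∀ x, f x.1 = φ (τ₁ x) x.1) ∧
      (∀ x, τ₁ x ∈ Set.Icc (-T) T) ∧
      Continuous τ₁ ∧
      (∀ (s : ℝ) (x : {x : M // x ∉ Crit}) (h : φ s x.1 ∉ Crit),
        τ₁ ⟨φ s x.1, h⟩ = τ₁ x) ∧
      (∀ τ' : {x : M // x ∉ Crit} → ℝ,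
        (∀ x, f x.1 = φ (τ' x) x.1) → τ' = τ₁) := by
  have hinj {p : M} (hp : p ∉ Crit) : Function.Injective (φ · p) :=
    injective_flow_of_forall_ne hφ0 hφadd (flow_ne_of_not_mem_crit hCrit hp)
  choose τ hτT hτ using hbound
  let τ₀ : {x : M // x ∉ Crit} → Icc (-T) T := fun x => ⟨τ x, hτT x⟩
  have hτ₀_iff (x : {x : M // x ∉ Crit}) (t : Icc (-T) T) : t = τ₀ x ↔ f x.1 = φ t x.1 :=
    ⟨fun h => h ▸ hτ x, fun h => Subtype.ext (hinj x.2 (h.symm.trans (hτ x)))⟩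
  have hgraph : IsClosed {p : {x : M // x ∉ Crit} × Icc (-T) T | p.2 = τ₀ p.1} := by
    simp_rw [hτ₀_iff]
    exact isClosed_eq (by fun_prop)
      (hφcont.comp (by fun_prop : Continuous fun p : {x : M // x ∉ Crit} × Icc (-T) T =>
        ((p.2 : ℝ), (p.1 : M))))
  refine ⟨fun x => τ x, fun x => hτ x, fun x => hτT x,
    continuous_subtype_val.comp (continuous_of_isClosed_graph hgraph), ?_, ?_⟩
  · intro s x hs
    exact hinj hs ((hτ _).symm.trans (apply_flow_eq_flow_of_apply_eq hφadd hcomm (hτ x) s))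
  · intro τ' hτ'
    funext x
    exact hinj x.2 ((hτ' x).symm.trans (hτ x))

/-- Given a compact metric space `M`, a continuous flow `φ` on `M`, and a
homeomorphism `f` commuting with `φ` such that every point is displaced along its orbit by a
time in `[-T, T]`, there is a unique function `τ₁` on the complement of the critical set
(fixed and periodic points) with `f x = φ (τ₁ x) x`; moreover `τ₁` takes values in `[-T, T]`,
is continuous and is `φ`-invariant. -/
theorem stmt_0
    {M : Type*} [MetricSpace M] [CompactSpace M]
    (φ : ℝ → M → M)
    (hφcont : Continuous fun q : ℝ × M => φ q.1 q.2)
    (hφ0 : ∀ x, φ 0 x = x)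
    (hφadd : ∀ s t x, φ (s + t) x = φ s (φ t x))
    (f : M ≃ₜ M)
    (hcomm : ∀ t x, f (φ t x) = φ t (f x))
    (T : ℝ) (hT : 0 < T)
    (hbound : ∀ p : M, ∃ t ∈ Set.Icc (-T) T, f p = φ t p)
    (Crit : Set M)
    (hCrit : Crit = {p | (∀ t, φ t p = p) ∨
      ((¬ ∀ t, φ t p = p) ∧ ∃ s, s ≠ 0 ∧ φ s p = p)}) :
    ∃ τ₁ : {x : M // x ∉ Crit} → ℝ,
      (∀ x, f x.1 = φ (τ₁ x) x.1) ∧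
      (∀ x, τ₁ x ∈ Set.Icc (-T) T) ∧
      Continuous τ₁ ∧
      (∀ (s : ℝ) (x : {x : M // x ∉ Crit}) (h : φ s x.1 ∉ Crit),
        τ₁ ⟨φ s x.1, h⟩ = τ₁ x) ∧
      (∀ τ' : {x : M // x ∉ Crit} → ℝ,
        (∀ x, f x.1 = φ (τ' x) x.1) → τ' = τ₁) :=
  stmt_0_general φ hφcont hφ0 hφadd f hcomm T hbound Crit hCrit
end

section
/- Let M be a compact metric space and φ a continuous flow on M having no fixed points and no periodic points. Let f : M → M be a homeomorphism commuting with φ, and assume there exists T > 0 such that for every p ∈ M there is t ∈ [-T, T] with f(p) = φ_t(p). Then there exists a continuous φ-invariant function τ : M → ℝ (i.e. τ(φ_s(x)) = τ(x) for all s ∈ ℝ, x ∈ M) such that f(p) = φ_{τ(p)}(p) for every p ∈ M. -/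
/-!
Since the flow has no fixed or periodic points, each orbit map `t ↦ φ t p` is injective, so the
time `τ p` with `f p = φ (τ p) p` is unique. Uniqueness together with `f ∘ φ_s = φ_s ∘ f` makes
`τ` constant along orbits. For continuity, `τ` takes values in the compact interval `[-T, T]` and
its graph is the closed set `{(p, t) | f p = φ t p}`; a map into a compact space with closed graph
is continuous, because projecting along a compact factor is a closed map.
-/

open Set

theorem continuous_of_isClosed_graph_of_compactSpace {X Y : Type*} [TopologicalSpace X]
    [TopologicalSpace Y] [CompactSpace Y] {g : X → Y}
    (hg : IsClosed {q : X × Y | q.2 = g q.1}) : Continuous g := by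
  refine continuous_iff_isClosed.mpr fun C hC => ?_
  have hpre : g ⁻¹' C = Prod.fst '' ({q : X × Y | q.2 = g q.1} ∩ univ ×ˢ C) := by
    ext x
    constructor
    · intro hx
      exact ⟨(x, g x), ⟨rfl, mem_univ x, hx⟩, rfl⟩
    · rintro ⟨q, ⟨hq, -, hqC⟩, rfl⟩
      rwa [mem_preimage, ← hq]
  rw [hpre]
  exact isClosedMap_fst_of_compactSpace _ (hg.inter (isClosed_univ.prod hC))

section Flow

variable {M : Type*} {φ : ℝ → M → M}

theorem flow_time_unique (hφadd : ∀ s t x, φ (s + t) x = φ s (φ t x))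
    (hnocrit : ∀ (p : M) (s : ℝ), s ≠ 0 → φ s p ≠ p) {p : M} {a b : ℝ}
    (h : φ a p = φ b p) : a = b := by
  by_contra hne
  refine hnocrit (φ b p) (a - b) (sub_ne_zero.mpr hne) ?_
  rw [← hφadd, sub_add_cancel, h]

theorem flow_time_invariant (hφadd : ∀ s t x, φ (s + t) x = φ s (φ t x))
    (hnocrit : ∀ (p : M) (s : ℝ), s ≠ 0 → φ s p ≠ p) {f : M → M}
    (hcomm : ∀ t x, f (φ t x) = φ t (f x)) {τ : M → ℝ} (hτ : ∀ p, f p = φ (τ p) p)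
    (s : ℝ) (x : M) : τ (φ s x) = τ x := by
  refine flow_time_unique hφadd hnocrit (p := φ s x) ?_
  rw [← hτ, hcomm, hτ, ← hφadd, ← hφadd, add_comm]

theorem continuous_flow_time [TopologicalSpace M] [T2Space M]
    (hφcont : Continuous fun q : ℝ × M => φ q.1 q.2)
    (hφadd : ∀ s t x, φ (s + t) x = φ s (φ t x))
    (hnocrit : ∀ (p : M) (s : ℝ), s ≠ 0 → φ s p ≠ p) {f : M → M} (hf : Continuous f)
    {K : Set ℝ} (hK : IsCompact K) {τ : M → ℝ} (hτK : ∀ p, τ p ∈ K)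
    (hτ : ∀ p, f p = φ (τ p) p) : Continuous τ := by
  have : CompactSpace K := isCompact_iff_compactSpace.mp hK
  let τK : M → K := fun p => ⟨τ p, hτK p⟩
  have hgraph : {q : M × K | q.2 = τK q.1} = {q : M × K | f q.1 = φ q.2 q.1} := by
    ext q
    show q.2 = τK q.1 ↔ f q.1 = φ q.2 q.1
    refine ⟨fun hq => by rw [hτ, hq], fun hq => Subtype.ext ?_⟩
    exact flow_time_unique hφadd hnocrit (hq.symm.trans (hτ q.1))
  have hτK_cont : Continuous τK := by
    refine continuous_of_isClosed_graph_of_compactSpace ?_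
    rw [hgraph]
    exact isClosed_eq (hf.comp continuous_fst)
      (hφcont.comp ((continuous_subtype_val.comp continuous_snd).prodMk continuous_fst))
  exact continuous_subtype_val.comp hτK_cont

end Flow

theorem stmt_1_general
    {M : Type*} [MetricSpace M]
    (φ : ℝ → M → M)
    (hφcont : Continuous fun q : ℝ × M => φ q.1 q.2)
    (hφadd : ∀ s t x, φ (s + t) x = φ s (φ t x))
    (hnocrit : ∀ (p : M) (s : ℝ), s ≠ 0 → φ s p ≠ p)
    (f : M ≃ₜ M)
    (hcomm : ∀ t x, f (φ t x) = φ t (f x))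
    (T : ℝ)
    (hbound : ∀ p : M, ∃ t ∈ Set.Icc (-T) T, f p = φ t p) :
    ∃ τ : M → ℝ, Continuous τ ∧
      (∀ (s : ℝ) (x : M), τ (φ s x) = τ x) ∧
      (∀ p : M, f p = φ (τ p) p) := by
  choose τ hτmem hτ using hbound
  exact ⟨τ, continuous_flow_time hφcont hφadd hnocrit f.continuous isCompact_Icc hτmem hτ,
    flow_time_invariant hφadd hnocrit hcomm hτ, hτ⟩

/-- Quasi-triviality for flows without fixed or periodic points. -/
theorem stmt_1
    {M : Type*} [MetricSpace M] [CompactSpace M]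
    (φ : ℝ → M → M)
    (hφcont : Continuous fun q : ℝ × M => φ q.1 q.2)
    (hφ0 : ∀ x, φ 0 x = x)
    (hφadd : ∀ s t x, φ (s + t) x = φ s (φ t x))
    (hnocrit : ∀ (p : M) (s : ℝ), s ≠ 0 → φ s p ≠ p)
    (f : M ≃ₜ M)
    (hcomm : ∀ t x, f (φ t x) = φ t (f x))
    (T : ℝ) (hT : 0 < T)
    (hbound : ∀ p : M, ∃ t ∈ Set.Icc (-T) T, f p = φ t p) :
    ∃ τ : M → ℝ, Continuous τ ∧
      (∀ (s : ℝ) (x : M), τ (φ s x) = τ x) ∧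
      (∀ p : M, f p = φ (τ p) p) :=
  stmt_1_general φ hφcont hφadd hnocrit f hcomm T hbound
end

section
/- Let M be a compact metric space, φ a continuous flow on M, f : M → M a homeomorphism commuting with φ, and p a periodic point of φ with minimal period π. Suppose x, y ∈ W^{ss}(p) and a, b ∈ ℝ satisfy f(x) = φ_a(x) and f(y) = φ_b(y). Then a − b is an integer multiple of π. -/
open Filter
open scoped Uniformity

/-!
Because `f` is uniformly continuous and commutes with the flow, it carries the asymptotic pair
`(φ_t x, φ_t y)` to the asymptotic pair `(φ_{t+a} x, φ_{t+b} y)`. Both points shadow the orbit of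
`p`, so `φ_{t+a} p` and `φ_{t+b} p` are asymptotic as well. Sampled at `t = nπ` this pair is
constant, hence `φ_a p = φ_b p`: `a - b` is a period of `p`, and by minimality of `π` the periods
of `p` form the group `πℤ`.
-/

section Periods

variable {M : Type*} (φ : ℝ → M → M) (hφ0 : ∀ x, φ 0 x = x)
  (hφadd : ∀ s t x, φ (s + t) x = φ s (φ t x))

def periodSubgroup (p : M) : AddSubgroup ℝ where
  carrier := {t | φ t p = p}
  zero_mem' := hφ0 p
  add_mem' {s t} (hs : φ s p = p) (ht : φ t p = p) :=
    show φ (s + t) p = p by rw [hφadd, ht, hs]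
  neg_mem' {t} (ht : φ t p = p) :=
    show φ (-t) p = p by conv_lhs => rw [← ht, ← hφadd, neg_add_cancel, hφ0]

variable {φ hφ0 hφadd} {p : M}

@[simp]
lemma mem_periodSubgroup {t : ℝ} : t ∈ periodSubgroup φ hφ0 hφadd p ↔ φ t p = p :=
  Iff.rfl

lemma sub_mem_periodSubgroup_of_flow_eq {a b : ℝ} (h : φ a p = φ b p) :
    a - b ∈ periodSubgroup φ hφ0 hφadd p := by
  rw [mem_periodSubgroup, sub_eq_neg_add, hφadd, h, ← hφadd, neg_add_cancel, hφ0]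

lemma natCast_mul_mem_periodSubgroup {π : ℝ} (hper : φ π p = p) (n : ℕ) :
    (n : ℝ) * π ∈ periodSubgroup φ hφ0 hφadd p := by
  rw [← nsmul_eq_mul]
  exact AddSubgroup.nsmul_mem _ hper n

lemma periodSubgroup_eq_zmultiples {π : ℝ} (hπpos : 0 < π) (hper : φ π p = p)
    (hmin : ∀ t, 0 < t → t < π → φ t p ≠ p) :
    periodSubgroup φ hφ0 hφadd p = AddSubgroup.zmultiples π := by
  rw [AddSubgroup.zmultiples_eq_closure]
  refine AddSubgroup.cyclic_of_min ⟨⟨hper, hπpos⟩, fun t ⟨ht, htpos⟩ => ?_⟩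
  by_contra! htπ
  exact hmin t htpos htπ ht

end Periods

section Uniform

variable {M : Type*} [UniformSpace M] {φ : ℝ → M → M}

lemma eq_of_tendsto_const_uniformity [T0Space M] {β : Type*} {l : Filter β} [l.NeBot]
    {x y : M} (h : Tendsto (fun _ => (x, y)) l (𝓤 M)) : x = y := by
  refine t0Space_iff_uniformity.1 ‹_› x y fun r hr => ?_
  obtain ⟨_, hxy⟩ := (h.eventually_mem hr).exists
  exact hxy

lemma Filter.Tendsto.flow_add_uniformity {f : M → M} (hf : UniformContinuous f)
    (hφadd : ∀ s t x, φ (s + t) x = φ s (φ t x)) (hcomm : ∀ t x, f (φ t x) = φ t (f x))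
    {x y : M} {a b : ℝ} (hfx : f x = φ a x) (hfy : f y = φ b y)
    (hxy : Tendsto (fun t => (φ t x, φ t y)) atTop (𝓤 M)) :
    Tendsto (fun t => (φ (t + a) x, φ (t + b) y)) atTop (𝓤 M) := by
  simpa only [Function.comp_def, hcomm, hfx, hfy, ← hφadd] using Tendsto.comp hf hxy

lemma flow_eq_of_tendsto_flow_add_uniformity [T0Space M] (hφ0 : ∀ x, φ 0 x = x)
    (hφadd : ∀ s t x, φ (s + t) x = φ s (φ t x)) {p : M} {π a b : ℝ} (hπpos : 0 < π)
    (hper : φ π p = p) (h : Tendsto (fun t => (φ (t + a) p, φ (t + b) p)) atTop (𝓤 M)) :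
    φ a p = φ b p := by
  have hperiodic (n : ℕ) (c : ℝ) : φ (n * π + c) p = φ c p := by
    have hn : (n : ℝ) * π ∈ periodSubgroup φ hφ0 hφadd p := natCast_mul_mem_periodSubgroup hper n
    rw [add_comm, hφadd, mem_periodSubgroup.1 hn]
  have h_periods := h.comp (tendsto_natCast_atTop_atTop.atTop_mul_const hπpos)
  simp only [Function.comp_def, hperiodic] at h_periods
  exact eq_of_tendsto_const_uniformity h_periods

end Uniform

theorem stmt_5_general
    {M : Type*} [MetricSpace M] [CompactSpace M]
    (φ : ℝ → M → M)
    (hφ0 : ∀ x, φ 0 x = x)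
    (hφadd : ∀ s t x, φ (s + t) x = φ s (φ t x))
    (f : M ≃ₜ M)
    (hcomm : ∀ t x, f (φ t x) = φ t (f x))
    (Wss : M → Set M)
    (hWss : ∀ p, Wss p =
      {x : M | Tendsto (fun t : ℝ => dist (φ t x) (φ t p)) atTop (nhds 0)})
    (p : M) (π : ℝ)
    (hπpos : 0 < π) (hper : φ π p = p)
    (hmin : ∀ t, 0 < t → t < π → φ t p ≠ p)
    (x y : M) (hx : x ∈ Wss p) (hy : y ∈ Wss p)
    (a b : ℝ) (hfx : f x = φ a x) (hfy : f y = φ b y) :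
    ∃ k : ℤ, a - b = (k : ℝ) * π := by
  have hasymp {z : M} (hz : z ∈ Wss p) : Tendsto (fun t => (φ t z, φ t p)) atTop (𝓤 M) :=
    tendsto_uniformity_iff_dist_tendsto_zero.2 (by rwa [hWss] at hz)
  have hf : UniformContinuous f := CompactSpace.uniformContinuous_of_continuous f.continuous
  have hfxy := ((hasymp hx).uniformity_trans (hasymp hy).uniformity_symm).flow_add_uniformity
    hf hφadd hcomm hfx hfy
  have hshift (c : ℝ) := tendsto_atTop_add_const_right atTop c tendsto_id
  have hpp : Tendsto (fun t => (φ (t + a) p, φ (t + b) p)) atTop (𝓤 M) :=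
    (((hasymp hx).comp (hshift a)).uniformity_symm.uniformity_trans hfxy).uniformity_trans
      ((hasymp hy).comp (hshift b))
  have hab : a - b ∈ periodSubgroup φ hφ0 hφadd p := sub_mem_periodSubgroup_of_flow_eq
    (flow_eq_of_tendsto_flow_add_uniformity hφ0 hφadd hπpos hper hpp)
  rw [periodSubgroup_eq_zmultiples hπpos hper hmin, AddSubgroup.mem_zmultiples_iff] at hab
  obtain ⟨k, hk⟩ := hab
  exact ⟨k, by rw [← hk, zsmul_eq_mul]⟩

/-- If `f` commutes with the flow, `p` is periodic with minimal period `π`,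
and `x, y ∈ W^{ss}(p)` satisfy `f x = φ_a x`, `f y = φ_b y`, then `a - b` is an integer
multiple of `π`. -/
theorem stmt_5
    {M : Type*} [MetricSpace M] [CompactSpace M]
    (φ : ℝ → M → M)
    (hφcont : Continuous fun q : ℝ × M => φ q.1 q.2)
    (hφ0 : ∀ x, φ 0 x = x)
    (hφadd : ∀ s t x, φ (s + t) x = φ s (φ t x))
    (f : M ≃ₜ M)
    (hcomm : ∀ t x, f (φ t x) = φ t (f x))
    (Wss : M → Set M)
    (hWss : ∀ p, Wss p =
      {x : M | Tendsto (fun t : ℝ => dist (φ t x) (φ t p)) atTop (nhds 0)})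
    (p : M) (π : ℝ)
    (hnotfix : ¬ ∀ t, φ t p = p)
    (hπpos : 0 < π) (hper : φ π p = p)
    (hmin : ∀ t, 0 < t → t < π → φ t p ≠ p)
    (x y : M) (hx : x ∈ Wss p) (hy : y ∈ Wss p)
    (a b : ℝ) (hfx : f x = φ a x) (hfy : f y = φ b y) :
    ∃ k : ℤ, a - b = (k : ℝ) * π :=
  stmt_5_general φ hφ0 hφadd f hcomm Wss hWss p π hπpos hper hmin x y hx hy a b hfx hfy
end

section
/- Let A = [[3,2,1],[2,2,1],[1,1,1]] and B = [[2,1,1],[1,2,0],[1,0,1]], regarded as elements of GL(3, ℤ) (both have determinant 1, hence are invertible over ℤ). For all integers l, k, if A^l · B^k is the identity matrix, then l = 0 and k = 0. Equivalently, the group homomorphism ℤ² → GL(3, ℤ) sending (l,k) to A^l B^k is injective, so A and B generate a group isomorphic to ℤ². -/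
/-!
For every root `α` of `x³ - x² - 2x + 1`, the vector `(α² - 1, α, 1)` is a common eigenvector of
`A` and `B`, with eigenvalues `α² + α` and `α²`. So `A^l B^k = 1` forces
`(α² + α)^l (α²)^k = 1` for every real root `α`. Taking logarithms at the roots
`a ∈ (1.8, 1.9)` and `b ∈ (-1.3, -1.2)` gives two linear equations in `l, k`; the eigenvalues
`a² + a`, `a²`, `b²` exceed `1` while `0 < b² + b < 1`, so the system has nonzero determinant.
-/

open Matrix

section Eigenvector

variable {n K : Type*} [Fintype n] [DecidableEq n] [Field K]

theorem Matrix.GeneralLinearGroup.mulVec_zpow_of_mulVec_eq_smul {M : GL n K} {c : K}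
    {v : n → K} (h : (M : Matrix n n K) *ᵥ v = c • v) (l : ℤ) :
    ((M ^ l : GL n K) : Matrix n n K) *ᵥ v = c ^ l • v := by
  by_cases hv : v = 0
  · simp [hv]
  have hc : c ≠ 0 := by
    rintro rfl
    apply hv
    simpa [mulVec_mulVec] using congrArg (((M⁻¹ : GL n K) : Matrix n n K) *ᵥ ·) h
  have hinv : ((M⁻¹ : GL n K) : Matrix n n K) *ᵥ v = c⁻¹ • v := by
    rw [eq_inv_smul_iff₀ hc, ← mulVec_smul, ← h, mulVec_mulVec, ← Units.val_mul, inv_mul_cancel,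
      Units.val_one, one_mulVec]
  induction l using Int.induction_on with
  | zero => simp
  | succ m ih =>
    rw [_root_.zpow_add_one, Units.val_mul, ← mulVec_mulVec, h, mulVec_smul, ih, smul_smul,
      zpow_add_one₀ hc, mul_comm]
  | pred m ih =>
    rw [_root_.zpow_sub_one, Units.val_mul, ← mulVec_mulVec, hinv, mulVec_smul, ih, smul_smul,
      zpow_sub_one₀ hc, mul_comm]

theorem Matrix.GeneralLinearGroup.zpow_mul_zpow_eq_one_of_common_eigenvector {M N : GL n K}
    {c d : K} {v : n → K} (hv : v ≠ 0) (hM : (M : Matrix n n K) *ᵥ v = c • v)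
    (hN : (N : Matrix n n K) *ᵥ v = d • v) {l k : ℤ} (h : M ^ l * N ^ k = 1) :
    c ^ l * d ^ k = 1 := by
  have := congrArg (fun P : GL n K => (P : Matrix n n K) *ᵥ v) h
  simp only [Units.val_mul, ← mulVec_mulVec, mulVec_zpow_of_mulVec_eq_smul hN,
    mulVec_smul, mulVec_zpow_of_mulVec_eq_smul hM, smul_smul, Units.val_one, one_mulVec] at this
  exact smul_left_injective K hv (by simpa [mul_comm] using this)

end Eigenvector

section CommonEigenvector

variable {R : Type*} [CommRing R] {α : R}

theorem mulVec_eigenvector_A (hα : α ^ 3 = α ^ 2 + 2 * α - 1) :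
    (!![3, 2, 1; 2, 2, 1; 1, 1, 1] : Matrix (Fin 3) (Fin 3) R) *ᵥ ![α ^ 2 - 1, α, 1]
      = (α ^ 2 + α) • ![α ^ 2 - 1, α, 1] := by
  ext i
  fin_cases i <;>
    simp only [Fin.zero_eta, Fin.mk_one, Fin.reduceFinMk, mulVec, dotProduct, Fin.sum_univ_three,
      of_apply, cons_val', cons_val_fin_one, cons_val_zero, cons_val_one, cons_val, Fin.isValue,
      Pi.smul_apply, smul_eq_mul]
  · linear_combination (-α - 2) * hα
  · linear_combination -hα
  · ring

theorem mulVec_eigenvector_B (hα : α ^ 3 = α ^ 2 + 2 * α - 1) :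
    (!![2, 1, 1; 1, 2, 0; 1, 0, 1] : Matrix (Fin 3) (Fin 3) R) *ᵥ ![α ^ 2 - 1, α, 1]
      = α ^ 2 • ![α ^ 2 - 1, α, 1] := by
  ext i
  fin_cases i <;>
    simp only [Fin.zero_eta, Fin.mk_one, Fin.reduceFinMk, mulVec, dotProduct, Fin.sum_univ_three,
      of_apply, cons_val', cons_val_fin_one, cons_val_zero, cons_val_one, cons_val, Fin.isValue,
      Pi.smul_apply, smul_eq_mul]
  · linear_combination (-α - 1) * hα
  · linear_combination -hα
  · ring

end CommonEigenvector

theorem eigenvalue_relation {K : Type*} [Field K] {A B : GL (Fin 3) ℤ}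
    (hA : (A : Matrix (Fin 3) (Fin 3) ℤ) = !![3, 2, 1; 2, 2, 1; 1, 1, 1])
    (hB : (B : Matrix (Fin 3) (Fin 3) ℤ) = !![2, 1, 1; 1, 2, 0; 1, 0, 1])
    {l k : ℤ} (h : A ^ l * B ^ k = 1) {α : K} (hα : α ^ 3 = α ^ 2 + 2 * α - 1) :
    (α ^ 2 + α) ^ l * (α ^ 2) ^ k = 1 := by
  let f := Matrix.GeneralLinearGroup.map (n := Fin 3) (Int.castRingHom K)
  have hA' : (f A : Matrix (Fin 3) (Fin 3) K) = !![3, 2, 1; 2, 2, 1; 1, 1, 1] := by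
    ext i j; fin_cases i <;> fin_cases j <;> simp [f, hA]
  have hB' : (f B : Matrix (Fin 3) (Fin 3) K) = !![2, 1, 1; 1, 2, 0; 1, 0, 1] := by
    ext i j; fin_cases i <;> fin_cases j <;> simp [f, hB]
  refine Matrix.GeneralLinearGroup.zpow_mul_zpow_eq_one_of_common_eigenvector
    (v := ![α ^ 2 - 1, α, 1]) (fun hv => by simpa using congrFun hv 2)
    (hA' ▸ mulVec_eigenvector_A hα) (hB' ▸ mulVec_eigenvector_B hα) ?_
  rw [← map_zpow, ← map_zpow, ← map_mul, h, map_one]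

theorem exists_root_cubic_mem_Ioo {x y : ℝ} (hxy : x ≤ y) (hx : x ^ 3 - x ^ 2 - 2 * x + 1 < 0)
    (hy : 0 < y ^ 3 - y ^ 2 - 2 * y + 1) :
    ∃ α ∈ Set.Ioo x y, α ^ 3 = α ^ 2 + 2 * α - 1 := by
  obtain ⟨α, hα, hα0⟩ := intermediate_value_Ioo hxy
    (f := fun t : ℝ => t ^ 3 - t ^ 2 - 2 * t + 1) (by fun_prop) ⟨hx, hy⟩
  exact ⟨α, hα, by linear_combination hα0⟩

theorem eq_zero_of_zpow_mul_zpow_eq_one {x y u w : ℝ} (hx : 1 < x) (hy : 1 < y) (hu₀ : 0 < u)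
    (hu₁ : u < 1) (hw : 1 < w) {l k : ℤ} (hxy : x ^ l * y ^ k = 1) (huw : u ^ l * w ^ k = 1) :
    l = 0 ∧ k = 0 := by
  have log_eq {s t : ℝ} (hs : 0 < s) (ht : 0 < t) (h : s ^ l * t ^ k = 1) :
      l * Real.log s + k * Real.log t = 0 := by
    have := congrArg Real.log h
    rwa [Real.log_mul (zpow_ne_zero _ hs.ne') (zpow_ne_zero _ ht.ne'), Real.log_zpow,
      Real.log_zpow, Real.log_one] at this
  have e₁ := log_eq (by linarith) (by linarith) hxy
  have e₂ := log_eq hu₀ (by linarith) huw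
  have hlx := Real.log_pos hx
  have hly := Real.log_pos hy
  have hlu := Real.log_neg hu₀ hu₁
  have hlw := Real.log_pos hw
  have hdet : 0 < Real.log x * Real.log w - Real.log y * Real.log u := by nlinarith
  have hl : (l : ℝ) = 0 := by
    have : (l : ℝ) * (Real.log x * Real.log w - Real.log y * Real.log u) = 0 := by
      linear_combination Real.log w * e₁ - Real.log y * e₂
    simpa [hdet.ne'] using this
  have hk : (k : ℝ) = 0 := by simpa [hl, hly.ne'] using e₁
  exact ⟨by exact_mod_cast hl, by exact_mod_cast hk⟩

theorem injective_zpow_mul_zpow {G : Type*} [Group G] {a b : G}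
    (h : ∀ l k : ℤ, a ^ l * b ^ k = 1 → l = 0 ∧ k = 0) :
    Function.Injective (fun p : ℤ × ℤ => a ^ p.1 * b ^ p.2) := by
  rintro ⟨p₁, p₂⟩ ⟨q₁, q₂⟩ hpq
  have : a ^ (p₁ - q₁) * b ^ (p₂ - q₂) = 1 :=
    calc a ^ (p₁ - q₁) * b ^ (p₂ - q₂) = a ^ (-q₁) * (a ^ p₁ * b ^ p₂) * b ^ (-q₂) := by group
      _ = a ^ (-q₁) * (a ^ q₁ * b ^ q₂) * b ^ (-q₂) := by rw [show a ^ p₁ * b ^ p₂ = a ^ q₁ * b ^ q₂ from hpq]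
      _ = 1 := by group
  obtain ⟨h₁, h₂⟩ := h _ _ this
  exact Prod.ext (by omega) (by omega)

/-- Viewing `A = [[3,2,1],[2,2,1],[1,1,1]]` and
`B = [[2,1,1],[1,2,0],[1,0,1]]` as elements of `GL(3, ℤ)`, one has `A^l * B^k = 1` only for
`l = k = 0`; equivalently, `(l, k) ↦ A^l * B^k` is injective on `ℤ²`, so `A` and `B`
generate a group isomorphic to `ℤ²`. -/
theorem stmt_10
    (A B : GL (Fin 3) ℤ)
    (hA : (A : Matrix (Fin 3) (Fin 3) ℤ) = !![3, 2, 1; 2, 2, 1; 1, 1, 1])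
    (hB : (B : Matrix (Fin 3) (Fin 3) ℤ) = !![2, 1, 1; 1, 2, 0; 1, 0, 1]) :
    (∀ l k : ℤ, A ^ l * B ^ k = 1 → l = 0 ∧ k = 0) ∧
    Function.Injective (fun p : ℤ × ℤ => A ^ p.1 * B ^ p.2) := by
  have trivial_relation (l k : ℤ) (h : A ^ l * B ^ k = 1) : l = 0 ∧ k = 0 := by
    obtain ⟨a, ⟨ha₁, ha₂⟩, ha⟩ := exists_root_cubic_mem_Ioo (x := 1.8) (y := 1.9)
      (by norm_num) (by norm_num) (by norm_num)
    obtain ⟨b, ⟨hb₁, hb₂⟩, hb⟩ := exists_root_cubic_mem_Ioo (x := -1.3) (y := -1.2)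
      (by norm_num) (by norm_num) (by norm_num)
    exact eq_zero_of_zpow_mul_zpow_eq_one (by nlinarith) (by nlinarith) (by nlinarith)
      (by nlinarith) (by nlinarith) (eigenvalue_relation hA hB h ha)
      (eigenvalue_relation hA hB h hb)
  exact ⟨trivial_relation, injective_zpow_mul_zpow trivial_relation⟩
end
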